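/- arXiv:1802.02012 — 2 statements merged into one kernel-verified Lean document; each statement's English description precedes it below -/
import Mathlib

section
/- Let A be a Banach algebra and φ a character (nonzero multiplicative linear functional) on A. If A is strong pseudo-amenable, then A is approximately left φ-amenable. -/
noncomputable section

open ContinuousLinearMap NormedSpace

/-- The topological dual of a normed space, as in the older Mathlib (`NormedSpace.Dual`). -/
abbrev NormedSpace.Dual (𝕜 : Type*) [NontriviallyNormedField 𝕜] (E : Type*)
    [SeminormedAddCommGroup E] [NormedSpace 𝕜 E] : Type _ :=
  E →L[𝕜] 𝕜

/-- A directed index system for nets. -/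
structure DirSys : Type 1 where
  ι : Type
  le : ι → ι → Prop
  refl : ∀ i, le i i
  trans : ∀ {i j k}, le i j → le j k → le i k
  nonempty : Nonempty ι
  directed : ∀ i j, ∃ k, le i k ∧ le j k

/-- Convergence of a net indexed by a directed system, in a (pseudo)metric space. -/
def DirSys.Tendsto (D : DirSys) {X : Type*} [PseudoMetricSpace X] (m : D.ι → X) (x : X) : Prop :=
  ∀ ε : ℝ, 0 < ε → ∃ i, ∀ j, D.le i j → dist (m j) x < ε

variable (A : Type*) [NonUnitalNormedRing A] [NormedSpace ℂ A]
  [IsScalarTower ℂ A A] [SMulCommClass ℂ A A]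

/-- The continuous bilinear forms on `A`, i.e. the dual space of the projective tensor
product `A ⊗̂ A`. -/
abbrev BilForms := A →L[ℂ] NormedSpace.Dual ℂ A

/-- The bidual `(A ⊗̂ A)**` of the projective tensor product, realized concretely as the
dual space of the space of continuous bilinear forms on `A` (the latter being canonically,
isometrically, the dual of `A ⊗̂ A`). -/
abbrev TensorBidual := NormedSpace.Dual ℂ (BilForms A)

/-- The bidual `A**` of `A`. -/
abbrev Bidual := NormedSpace.Dual ℂ (NormedSpace.Dual ℂ A)

variable {A}

/-- The elementary tensor `x ⊗ y`, viewed inside `(A ⊗̂ A)**` via the canonical isometric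
embedding of `A ⊗̂ A` into its bidual. -/
def elemT (x y : A) : TensorBidual A :=
  (ContinuousLinearMap.apply ℂ ℂ y).comp (ContinuousLinearMap.apply ℂ (NormedSpace.Dual ℂ A) x)

variable (A)

/-- The canonical isometric copy of `A ⊗̂ A` inside its bidual: the closure of the linear
span of the elementary tensors. -/
def ptp : Submodule ℂ (TensorBidual A) :=
  (Submodule.span ℂ {m : TensorBidual A | ∃ x y : A, m = elemT x y}).topologicalClosure

/-- The map `f ↦ f·a` on bilinear forms, `(f·a)(x,y) = f(ax, y)`; predual of the left
module action of `A` on `(A ⊗̂ A)**`. -/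
def leftBil (a : A) : BilForms A →L[ℂ] BilForms A :=
  (compL ℂ A A (NormedSpace.Dual ℂ A)).flip (ContinuousLinearMap.mul ℂ A a)

/-- The map `f ↦ a·f` on bilinear forms, `(a·f)(x,y) = f(x, ya)`; predual of the right
module action of `A` on `(A ⊗̂ A)**`. -/
def rightBil (a : A) : BilForms A →L[ℂ] BilForms A :=
  compL ℂ A (NormedSpace.Dual ℂ A) (NormedSpace.Dual ℂ A)
    ((compL ℂ A A ℂ).flip ((ContinuousLinearMap.mul ℂ A).flip a))

variable {A}

/-- The left module action `a · m` of `A` on `(A ⊗̂ A)**`, extending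
`a · (x ⊗ y) = (a x) ⊗ y`. -/
def tsmulL (a : A) (m : TensorBidual A) : TensorBidual A := m.comp (leftBil A a)

/-- The right module action `m · a` of `A` on `(A ⊗̂ A)**`, extending
`(x ⊗ y) · a = x ⊗ (y a)`. -/
def tsmulR (a : A) (m : TensorBidual A) : TensorBidual A := m.comp (rightBil A a)

variable (A)

/-- The adjoint `π_A* : A* → (A ⊗̂ A)*` of the product morphism `π_A`, namely
`(π_A* f)(x, y) = f (x y)`. -/
def piStar : NormedSpace.Dual ℂ A →L[ℂ] BilForms A :=
  ((compL ℂ A (A →L[ℂ] A) (NormedSpace.Dual ℂ A)).flip (ContinuousLinearMap.mul ℂ A)).comp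
    (compL ℂ A A ℂ)

variable {A}

/-- The second adjoint `π_A** : (A ⊗̂ A)** → A**` of the product morphism. -/
def piSS (m : TensorBidual A) : Bidual A := m.comp (piStar A)

variable (A)

/-- The map `f ↦ f·a` on `A*`, `(f·a)(x) = f(ax)`. -/
def dualROp (a : A) : NormedSpace.Dual ℂ A →L[ℂ] NormedSpace.Dual ℂ A :=
  (compL ℂ A A ℂ).flip (ContinuousLinearMap.mul ℂ A a)

/-- The map `f ↦ a·f` on `A*`, `(a·f)(x) = f(xa)`. -/
def dualLOp (a : A) : NormedSpace.Dual ℂ A →L[ℂ] NormedSpace.Dual ℂ A :=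
  (compL ℂ A A ℂ).flip ((ContinuousLinearMap.mul ℂ A).flip a)

variable {A}

/-- The product `a · Φ` of `a ∈ A` and `Φ ∈ A**`: `(a·Φ)(f) = Φ(f·a)`. -/
def bsmulL (a : A) (Φ : Bidual A) : Bidual A := Φ.comp (dualROp A a)

/-- The product `Φ · a` of `Φ ∈ A**` and `a ∈ A`: `(Φ·a)(f) = Φ(a·f)`. -/
def bsmulR (a : A) (Φ : Bidual A) : Bidual A := Φ.comp (dualLOp A a)

/-- The canonical isometric embedding of `A` into its bidual. -/
def inclB (a : A) : Bidual A := NormedSpace.inclusionInDoubleDual ℂ A a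

variable (A)

/-- A Banach algebra `A` is *strong pseudo-amenable* if there is a (not necessarily bounded)
net `(m_α)` in `(A ⊗̂ A)**` such that `a·m_α − m_α·a → 0` and
`a·π_A**(m_α) = π_A**(m_α)·a → a` for every `a ∈ A`. -/
def StrongPseudoAmenable : Prop :=
  ∃ (D : DirSys) (m : D.ι → TensorBidual A),
    (∀ a : A, D.Tendsto (fun α => tsmulL a (m α) - tsmulR a (m α)) 0) ∧
    (∀ (a : A) (α : D.ι), bsmulL a (piSS (m α)) = bsmulR a (piSS (m α))) ∧
    (∀ a : A, D.Tendsto (fun α => bsmulR a (piSS (m α))) (inclB a))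

/-- A Banach algebra `A` is *pseudo-amenable* if there is a (not necessarily bounded)
net `(m_α)` in `A ⊗̂ A` such that `a·m_α − m_α·a → 0` and `π_A(m_α)a → a` for every `a ∈ A`. -/
def PseudoAmenable : Prop :=
  ∃ (D : DirSys) (m : D.ι → TensorBidual A),
    (∀ α, m α ∈ ptp A) ∧
    (∀ a : A, D.Tendsto (fun α => tsmulL a (m α) - tsmulR a (m α)) 0) ∧
    (∀ a : A, D.Tendsto (fun α => bsmulR a (piSS (m α))) (inclB a))

/-- A Banach algebra `A` is *pseudo-contractible* if there is a net `(m_α)` in `A ⊗̂ A`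
such that `a·m_α = m_α·a` and `π_A(m_α)a → a` for every `a ∈ A`. -/
def PseudoContractible : Prop :=
  ∃ (D : DirSys) (m : D.ι → TensorBidual A),
    (∀ α, m α ∈ ptp A) ∧
    (∀ (a : A) (α : D.ι), tsmulL a (m α) = tsmulR a (m α)) ∧
    (∀ a : A, D.Tendsto (fun α => bsmulR a (piSS (m α))) (inclB a))

/-- A Banach algebra `A` is *amenable* if it has a bounded approximate diagonal: a bounded
net `(m_α)` in `A ⊗̂ A` such that `a·m_α − m_α·a → 0` and `π_A(m_α)a → a` for every `a ∈ A`. -/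
def AmenableBanachAlgebra : Prop :=
  ∃ (D : DirSys) (m : D.ι → TensorBidual A) (C : ℝ),
    (∀ α, m α ∈ ptp A) ∧
    (∀ α, ‖m α‖ ≤ C) ∧
    (∀ a : A, D.Tendsto (fun α => tsmulL a (m α) - tsmulR a (m α)) 0) ∧
    (∀ a : A, D.Tendsto (fun α => bsmulR a (piSS (m α))) (inclB a))

end

/-- A character on `A`: a nonzero multiplicative linear functional. -/
def IsCharacter (A : Type) [NonUnitalNormedRing A] [NormedSpace ℂ A] (φ : A →ₗ[ℂ] ℂ) : Prop :=
  φ ≠ 0 ∧ ∀ a b : A, φ (a * b) = φ a * φ b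

/-- `A` is approximately left `φ`-amenable: there is a (not necessarily bounded) net `(n_α)`
in `A` with `a n_α − φ(a) n_α → 0` and `φ(n_α) → 1` for every `a ∈ A`. -/
def ApproximatelyLeftCharAmenable (A : Type) [NonUnitalNormedRing A] [NormedSpace ℂ A]
    (φ : A →ₗ[ℂ] ℂ) : Prop :=
  ∃ (D : DirSys) (n : D.ι → A),
    (∀ a : A, D.Tendsto (fun α => a * n α - φ a • n α) 0) ∧
    D.Tendsto (fun α => φ (n α)) 1

/-! Slicing the second tensor factor by the (automatically continuous) character `φ` turns the
net `m_α` into elements `N_α = (id ⊗ φ)** m_α` of `A**` with `a·N_α - φ(a) N_α → 0` and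
`N_α(φ) → 1`. For a finite set `F ⊆ A` these are approximate equations `T** N_α ≈ y` for the
map `T n = ((a n - φ(a) n)_{a ∈ F}, φ(n))` and `y = (0, 1)`. By Hahn–Banach the distance from `y`
to `T(A)` is at most `‖T** N_α - y‖`, so the equations can be solved approximately in `A` itself.
-/

noncomputable section BidualDefect

open ContinuousLinearMap

variable {𝕜 E F : Type*} [RCLike 𝕜] [SeminormedAddCommGroup E] [NormedSpace 𝕜 E]
  [SeminormedAddCommGroup F] [NormedSpace 𝕜 F]

/-- `T** Ψ - y`, with `y ∈ F` viewed in `F**`. -/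
def bidualDefect (T : E →L[𝕜] F) (Ψ : StrongDual 𝕜 (StrongDual 𝕜 E)) (y : F) :
    StrongDual 𝕜 (StrongDual 𝕜 F) :=
  Ψ.comp ((compL 𝕜 E F 𝕜).flip T) - NormedSpace.inclusionInDoubleDual 𝕜 F y

@[simp]
theorem bidualDefect_apply (T : E →L[𝕜] F) (Ψ : StrongDual 𝕜 (StrongDual 𝕜 E)) (y : F)
    (g : StrongDual 𝕜 F) : bidualDefect T Ψ y g = Ψ (g.comp T) - g y :=
  rfl

theorem exists_norm_apply_sub_lt_of_norm_bidualDefect_lt {T : E →L[𝕜] F}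
    {Ψ : StrongDual 𝕜 (StrongDual 𝕜 E)} {y : F} {ε : ℝ} (h : ‖bidualDefect T Ψ y‖ < ε) :
    ∃ x, ‖T x - y‖ < ε := by
  by_contra! hfar
  set M := LinearMap.range (T : E →ₗ[𝕜] F)
  have hy : ε ≤ ‖M.mkQL y‖ := by
    refine QuotientAddGroup.le_norm_iff.2 fun z hz => ?_
    obtain ⟨x, hx : T x = z - y⟩ : z - y ∈ M := (Submodule.Quotient.eq M).1 hz
    calc ε ≤ ‖T (-x) - y‖ := hfar _
      _ = ‖z‖ := by rw [map_neg, hx, ← norm_neg]; congr 1; abel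
  -- Hahn–Banach on `F ⧸ range T` gives a functional annihilating the range of `T`.
  obtain ⟨g, hg, hgy⟩ := exists_dual_vector'' 𝕜 (M.mkQL y)
  have hgT : (g.comp M.mkQL).comp T = 0 := by
    ext x
    have hx : (Submodule.Quotient.mk (T x) : F ⧸ M) = 0 :=
      (Submodule.Quotient.mk_eq_zero M).2 ⟨x, rfl⟩
    simp [hx]
  have hmk : ‖M.mkQL‖ ≤ 1 :=
    opNorm_le_bound _ zero_le_one fun z => by simpa using Submodule.Quotient.norm_mk_le M z
  have key := (bidualDefect T Ψ y).le_opNorm (g.comp M.mkQL)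
  rw [bidualDefect_apply, hgT, map_zero, zero_sub, norm_neg, comp_apply, hgy, RCLike.norm_ofReal,
    abs_norm] at key
  have hgmk : ‖g.comp M.mkQL‖ ≤ 1 :=
    (opNorm_comp_le g M.mkQL).trans (mul_le_one₀ hg (norm_nonneg _) hmk)
  linarith [mul_le_of_le_one_right (norm_nonneg (bidualDefect T Ψ y)) hgmk]

theorem norm_bidualDefect_prod_le {F' : Type*} [SeminormedAddCommGroup F'] [NormedSpace 𝕜 F']
    (T : E →L[𝕜] F) (T' : E →L[𝕜] F') (Ψ : StrongDual 𝕜 (StrongDual 𝕜 E)) (y : F) (y' : F') :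
    ‖bidualDefect (T.prod T') Ψ (y, y')‖ ≤ ‖bidualDefect T Ψ y‖ + ‖bidualDefect T' Ψ y'‖ := by
  refine opNorm_le_bound _ (by positivity) fun g => ?_
  have hsplit : bidualDefect (T.prod T') Ψ (y, y') g =
      bidualDefect T Ψ y (g.comp (inl 𝕜 F F')) + bidualDefect T' Ψ y' (g.comp (inr 𝕜 F F')) := by
    have hg : g.comp (T.prod T') =
        (g.comp (inl 𝕜 F F')).comp T + (g.comp (inr 𝕜 F F')).comp T' := by
      ext x
      exact (comp_inl_add_comp_inr g (T x, T' x)).symm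
    rw [bidualDefect_apply, bidualDefect_apply, bidualDefect_apply, hg, map_add,
      ← comp_inl_add_comp_inr g (y, y')]
    ring
  have hinl : ‖g.comp (inl 𝕜 F F')‖ ≤ ‖g‖ :=
    (opNorm_comp_le _ _).trans (mul_le_of_le_one_right (norm_nonneg g) (norm_inl_le_one 𝕜 F F'))
  have hinr : ‖g.comp (inr 𝕜 F F')‖ ≤ ‖g‖ :=
    (opNorm_comp_le _ _).trans (mul_le_of_le_one_right (norm_nonneg g) (norm_inr_le_one 𝕜 F F'))
  calc ‖bidualDefect (T.prod T') Ψ (y, y') g‖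
      ≤ ‖bidualDefect T Ψ y‖ * ‖g.comp (inl 𝕜 F F')‖
        + ‖bidualDefect T' Ψ y'‖ * ‖g.comp (inr 𝕜 F F')‖ :=
        hsplit ▸ norm_add_le_of_le (le_opNorm _ _) (le_opNorm _ _)
    _ ≤ (‖bidualDefect T Ψ y‖ + ‖bidualDefect T' Ψ y'‖) * ‖g‖ := by
        rw [add_mul]; gcongr

theorem norm_bidualDefect_pi_le {ι : Type*} [Fintype ι] [DecidableEq ι] {F : ι → Type*}
    [∀ i, SeminormedAddCommGroup (F i)] [∀ i, NormedSpace 𝕜 (F i)] (T : ∀ i, E →L[𝕜] F i)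
    (Ψ : StrongDual 𝕜 (StrongDual 𝕜 E)) (y : ∀ i, F i) :
    ‖bidualDefect (pi T) Ψ y‖ ≤ ∑ i, ‖bidualDefect (T i) Ψ (y i)‖ := by
  refine opNorm_le_bound _ (by positivity) fun g => ?_
  have hsplit : bidualDefect (pi T) Ψ y g =
      ∑ i, bidualDefect (T i) Ψ (y i) (g.comp (single 𝕜 F i)) := by
    have hg : g.comp (pi T) = ∑ i, (g.comp (single 𝕜 F i)).comp (T i) := by
      ext x
      simpa using (sum_comp_single (L := g) (v := fun i => T i x)).symm
    simp only [bidualDefect_apply, hg, map_sum, Finset.sum_sub_distrib, sum_comp_single]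
  have hsingle (i : ι) : ‖g.comp (single 𝕜 F i)‖ ≤ ‖g‖ :=
    (opNorm_comp_le _ _).trans (mul_le_of_le_one_right (norm_nonneg g) (norm_single_le_one 𝕜 F i))
  calc ‖bidualDefect (pi T) Ψ y g‖
      ≤ ∑ i, ‖bidualDefect (T i) Ψ (y i)‖ * ‖g.comp (single 𝕜 F i)‖ :=
        hsplit ▸ norm_sum_le_of_le _ fun i _ => le_opNorm _ _
    _ ≤ (∑ i, ‖bidualDefect (T i) Ψ (y i)‖) * ‖g‖ := by
        rw [Finset.sum_mul]; gcongr with i; exact hsingle i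

end BidualDefect

theorem LinearMap.norm_apply_le_of_map_mul {𝕜 A : Type*} [NormedField 𝕜] [CompleteSpace 𝕜]
    [NonUnitalNormedRing A] [NormedSpace 𝕜 A] [IsScalarTower 𝕜 A A] [SMulCommClass 𝕜 A A]
    [CompleteSpace A] (φ : A →ₗ[𝕜] 𝕜) (hφ : ∀ a b : A, φ (a * b) = φ a * φ b) (a : A) :
    ‖φ a‖ ≤ ‖a‖ := by
  -- extend `φ` to a unital character of the `ℓ¹`-unitization, where characters have norm `≤ 1`
  let Φ : WithLp 1 (Unitization 𝕜 A) →ₐ[𝕜] 𝕜 :=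
    (Unitization.lift { φ with map_mul' := hφ, map_zero' := map_zero φ }).comp
      (WithLp.unitizationAlgEquiv (𝕜 := 𝕜) (A := A) 𝕜).toAlgHom
  have hone : ‖(1 : WithLp 1 (Unitization 𝕜 A))‖ = 1 := by
    rw [WithLp.unitization_norm_def]
    exact (by simp : ‖(1 : Unitization 𝕜 A).fst‖ + ‖(1 : Unitization 𝕜 A).snd‖ = 1)
  simpa [Φ, hone, WithLp.unitization_norm_inr] using
    AlgHom.norm_apply_le_self_mul_norm_one Φ (WithLp.toLp 1 (a : Unitization 𝕜 A))

namespace DirSys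

open Filter Topology

def atTop (D : DirSys) : Filter D.ι := ⨅ i, 𝓟 {j | D.le i j}

theorem hasBasis_atTop (D : DirSys) : D.atTop.HasBasis (fun _ => True) fun i => {j | D.le i j} :=
  haveI := D.nonempty
  hasBasis_iInf_principal fun i i' => (D.directed i i').imp fun _ hk =>
    ⟨fun _ hj => D.trans hk.1 hj, fun _ hj => D.trans hk.2 hj⟩

instance (D : DirSys) : D.atTop.NeBot :=
  D.hasBasis_atTop.neBot_iff.2 fun {i} _ => ⟨i, D.refl i⟩

theorem tendsto_iff (D : DirSys) {X : Type*} [PseudoMetricSpace X] {m : D.ι → X} {x : X} :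
    D.Tendsto m x ↔ Filter.Tendsto m D.atTop (𝓝 x) := by
  simp [DirSys.Tendsto, D.hasBasis_atTop.tendsto_iff Metric.nhds_basis_ball]

end DirSys

noncomputable section Slice

open ContinuousLinearMap

variable {A : Type*} [NonUnitalNormedRing A] [NormedSpace ℂ A]

/-- `f ↦ f ⊗ ψ`; its adjoint is the slice map `(id ⊗ ψ)** : (A ⊗̂ A)** → A**`. -/
def sliceRight (ψ : StrongDual ℂ A) : StrongDual ℂ A →L[ℂ] BilForms A :=
  (smulRightL ℂ A (StrongDual ℂ A)).flip ψ

theorem norm_sliceRight_apply (ψ f : StrongDual ℂ A) : ‖sliceRight ψ f‖ = ‖f‖ * ‖ψ‖ :=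
  norm_smulRight_apply f ψ

variable [IsScalarTower ℂ A A] [SMulCommClass ℂ A A]

theorem leftBil_sliceRight (ψ f : StrongDual ℂ A) (a : A) :
    leftBil A a (sliceRight ψ f) = sliceRight ψ (dualROp A a f) :=
  rfl

variable {ψ : StrongDual ℂ A}

theorem rightBil_sliceRight (hψ : ∀ x y : A, ψ (x * y) = ψ x * ψ y) (f : StrongDual ℂ A)
    (a : A) :
    rightBil A a (sliceRight ψ f) = ψ a • sliceRight ψ f := by
  ext x y
  change f x * ψ (y * a) = ψ a * (f x * ψ y)
  rw [hψ]
  ring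

theorem sliceRight_self (hψ : ∀ x y : A, ψ (x * y) = ψ x * ψ y) :
    sliceRight ψ ψ = piStar A ψ := by
  ext x y
  exact (hψ x y).symm

theorem norm_bidualDefect_mul_sub_le (hψ : ∀ x y : A, ψ (x * y) = ψ x * ψ y)
    (m : TensorBidual A) (a : A) :
    ‖bidualDefect (mul ℂ A a - ψ a • ContinuousLinearMap.id ℂ A) (m.comp (sliceRight ψ)) 0‖ ≤
      ‖tsmulL a m - tsmulR a m‖ * ‖ψ‖ := by
  refine opNorm_le_bound _ (by positivity) fun g => ?_
  have hg : g.comp (mul ℂ A a - ψ a • ContinuousLinearMap.id ℂ A) =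
      dualROp A a g - ψ a • g := by
    ext x
    simp [dualROp]
  have hdefect : bidualDefect (mul ℂ A a - ψ a • ContinuousLinearMap.id ℂ A)
      (m.comp (sliceRight ψ)) 0 g = (tsmulL a m - tsmulR a m) (sliceRight ψ g) := by
    rw [bidualDefect_apply, map_zero, sub_zero, comp_apply, hg, map_sub, map_smul,
      ← leftBil_sliceRight, ← rightBil_sliceRight hψ, map_sub]
    rfl
  calc _ = ‖(tsmulL a m - tsmulR a m) (sliceRight ψ g)‖ := by rw [hdefect]
    _ ≤ ‖tsmulL a m - tsmulR a m‖ * (‖g‖ * ‖ψ‖) := by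
        rw [← norm_sliceRight_apply]; exact le_opNorm _ _
    _ = _ := by ring

theorem norm_bidualDefect_self_le (hψ : ∀ x y : A, ψ (x * y) = ψ x * ψ y)
    (m : TensorBidual A) {a : A} (ha : ψ a = 1) :
    ‖bidualDefect ψ (m.comp (sliceRight ψ)) 1‖ ≤ ‖bsmulR a (piSS m) - inclB a‖ * ‖ψ‖ := by
  refine opNorm_le_bound _ (by positivity) fun g => ?_
  have hg : g.comp ψ = g 1 • ψ := by
    ext x
    simpa [mul_comm] using g.map_smul (ψ x) 1
  have hunit : dualLOp A a ψ = ψ := by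
    ext x
    change ψ (x * a) = ψ x
    rw [hψ, ha, mul_one]
  have hdefect : bidualDefect ψ (m.comp (sliceRight ψ)) 1 g =
      g 1 * (bsmulR a (piSS m) - inclB a) ψ := by
    rw [bidualDefect_apply, comp_apply, hg, map_smul, sliceRight_self hψ, map_smul, sub_apply]
    change g 1 • m (piStar A ψ) - g 1 = g 1 * (m (piStar A (dualLOp A a ψ)) - ψ a)
    rw [hunit, ha, smul_eq_mul, mul_sub, mul_one]
  have hg1 : ‖g 1‖ ≤ ‖g‖ := by simpa using g.le_opNorm 1
  calc _ = ‖g 1‖ * ‖(bsmulR a (piSS m) - inclB a) ψ‖ := by rw [hdefect, norm_mul]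
    _ ≤ ‖g‖ * (‖bsmulR a (piSS m) - inclB a‖ * ‖ψ‖) := by gcongr; exact le_opNorm _ _
    _ = _ := by ring

end Slice

open ContinuousLinearMap Filter Topology in
theorem exists_forall_norm_mul_sub_smul_lt_of_strongPseudoAmenable {A : Type*}
    [NonUnitalNormedRing A] [NormedSpace ℂ A] [IsScalarTower ℂ A A] [SMulCommClass ℂ A A]
    (hA : StrongPseudoAmenable A) {ψ : StrongDual ℂ A} (hψ : ∀ x y : A, ψ (x * y) = ψ x * ψ y)
    (hψ₀ : ψ ≠ 0) (F : Finset A) {ε : ℝ} (hε : 0 < ε) :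
    ∃ n : A, (∀ a ∈ F, ‖a * n - ψ a • n‖ < ε) ∧ ‖ψ n - 1‖ < ε := by
  classical
  obtain ⟨a₀, ha₀⟩ : ∃ a, ψ a = 1 := by
    obtain ⟨x, hx⟩ := DFunLike.ne_iff.1 hψ₀
    exact ⟨(ψ x)⁻¹ • x, by simp [inv_mul_cancel₀ hx]⟩
  obtain ⟨D, m, hcomm, -, hunit⟩ := hA
  let T : A →L[ℂ] (F → A) × ℂ :=
    (pi fun a : F => mul ℂ A a - ψ a • ContinuousLinearMap.id ℂ A).prod ψ
  let bound (α : D.ι) : ℝ :=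
    ∑ a : F, ‖tsmulL (a : A) (m α) - tsmulR (a : A) (m α)‖ * ‖ψ‖ +
      ‖bsmulR a₀ (piSS (m α)) - inclB a₀‖ * ‖ψ‖
  have hdefect (α : D.ι) : ‖bidualDefect T ((m α).comp (sliceRight ψ)) (0, 1)‖ ≤ bound α := by
    exact (norm_bidualDefect_prod_le _ _ _ _ _).trans <| add_le_add
      ((norm_bidualDefect_pi_le _ _ _).trans
        (Finset.sum_le_sum fun a _ => norm_bidualDefect_mul_sub_le hψ _ _))
      (norm_bidualDefect_self_le hψ _ ha₀)
  have hbound : Tendsto bound D.atTop (𝓝 0) := by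
    have hcomm' (a : A) := (D.tendsto_iff.1 (hcomm a)).norm
    have hunit' := tendsto_iff_norm_sub_tendsto_zero.1 (D.tendsto_iff.1 (hunit a₀))
    have h := (tendsto_finsetSum Finset.univ fun (a : F) _ => (hcomm' a).mul_const ‖ψ‖).add
      (hunit'.mul_const ‖ψ‖)
    simpa only [norm_zero, zero_mul, Finset.sum_const_zero, add_zero] using h
  obtain ⟨α, hα⟩ := (hbound.eventually (gt_mem_nhds hε)).exists
  obtain ⟨n, hn⟩ := exists_norm_apply_sub_lt_of_norm_bidualDefect_lt ((hdefect α).trans_lt hα)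
  refine ⟨n, fun a ha => ?_, (_root_.norm_snd_le _).trans_lt hn⟩
  calc ‖a * n - ψ a • n‖ = ‖(T n - (0, 1)).1 ⟨a, ha⟩‖ := by simp [T]
    _ ≤ ‖T n - (0, 1)‖ := (norm_le_pi_norm _ _).trans (_root_.norm_fst_le _)
    _ < ε := hn

def DirSys.finsetPos (X : Type) [DecidableEq X] : DirSys where
  ι := Finset X × {ε : ℝ // 0 < ε}
  le i j := i.1 ⊆ j.1 ∧ j.2.1 ≤ i.2.1
  refl _ := ⟨subset_rfl, le_rfl⟩
  trans hij hjk := ⟨hij.1.trans hjk.1, hjk.2.trans hij.2⟩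
  nonempty := ⟨(∅, ⟨1, one_pos⟩)⟩
  directed i j := ⟨(i.1 ∪ j.1, ⟨min i.2.1 j.2.1, lt_min i.2.2 j.2.2⟩),
    ⟨Finset.subset_union_left, min_le_left _ _⟩, ⟨Finset.subset_union_right, min_le_right _ _⟩⟩

theorem approximatelyLeftCharAmenable_of_forall_finset {A : Type} [NonUnitalNormedRing A]
    [NormedSpace ℂ A] (φ : A →ₗ[ℂ] ℂ)
    (h : ∀ (F : Finset A) {ε : ℝ}, 0 < ε →
      ∃ n : A, (∀ a ∈ F, ‖a * n - φ a • n‖ < ε) ∧ ‖φ n - 1‖ < ε) :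
    ApproximatelyLeftCharAmenable A φ := by
  classical
  choose n hnF hnφ using fun i : Finset A × {ε : ℝ // 0 < ε} => h i.1 i.2.2
  refine ⟨DirSys.finsetPos A, n, fun a ε hε => ⟨({a}, ⟨ε, hε⟩), fun j hj => ?_⟩,
    fun ε hε => ⟨(∅, ⟨ε, hε⟩), fun j hj => ?_⟩⟩
  · rw [dist_zero_right]
    exact (hnF j a (hj.1 (Finset.mem_singleton_self a))).trans_le hj.2
  · rw [dist_eq_norm]
    exact (hnφ j).trans_le hj.2

/-- Let `A` be a Banach algebra and `φ` a character on `A`. If `A` is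
strong pseudo-amenable, then `A` is approximately left `φ`-amenable. -/
theorem approximatelyLeftCharAmenable_of_strongPseudoAmenable
    (A : Type) [NonUnitalNormedRing A] [NormedSpace ℂ A] [IsScalarTower ℂ A A]
    [SMulCommClass ℂ A A] [CompleteSpace A]
    (φ : A →ₗ[ℂ] ℂ) (hφ : IsCharacter A φ)
    (hA : StrongPseudoAmenable A) : ApproximatelyLeftCharAmenable A φ := by
  obtain ⟨hφ₀, hφmul⟩ := hφ
  let ψ : StrongDual ℂ A :=
    φ.mkContinuous 1 fun a => by simpa using φ.norm_apply_le_of_map_mul hφmul a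
  have hψ₀ : ψ ≠ 0 := fun h => hφ₀ (LinearMap.ext fun a => DFunLike.congr_fun h a)
  exact approximatelyLeftCharAmenable_of_forall_finset φ fun F _ hε =>
    exists_forall_norm_mul_sub_smul_lt_of_strongPseudoAmenable hA hφmul hψ₀ F hε
end

section
/- Let S be a right-zero semigroup (st = t for all s,t ∈ S) with |S| > 1. Then the semigroup algebra ℓ¹(S) is biflat but not strong pseudo-amenable. -/
/-- `(L, δ)` is a realization of the semigroup algebra `ℓ¹(S)` for the semigroup
multiplication `mulS` on `S`: the `δ s` are the point masses, multiplication is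
convolution (determined by `δ s * δ t = δ (s t)`), finite linear combinations of point
masses carry the `ℓ¹`-norm, and they have dense linear span. -/
def IsL1SemigroupAlgebra (S : Type) (mulS : S → S → S) (L : Type)
    [NonUnitalNormedRing L] [NormedSpace ℂ L] (δ : S → L) : Prop :=
  (∀ s t : S, δ s * δ t = δ (mulS s t)) ∧
  (∀ (F : Finset S) (c : S → ℂ), ‖∑ s ∈ F, c s • δ s‖ = ∑ s ∈ F, ‖c s‖) ∧
  ((Submodule.span ℂ (Set.range δ)).topologicalClosure = ⊤)

/-- A Banach algebra `A` is *biflat* if there is a bounded `A`-bimodule morphism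
`ρ : A → (A ⊗̂ A)**` with `π_A** ∘ ρ = ι_A` (the canonical embedding of `A` in `A**`). -/
def Biflat (A : Type) [NonUnitalNormedRing A] [NormedSpace ℂ A] [IsScalarTower ℂ A A]
    [SMulCommClass ℂ A A] : Prop :=
  ∃ ρ : A →L[ℂ] TensorBidual A,
    (∀ a b : A, ρ (a * b) = tsmulL a (ρ b)) ∧
    (∀ a b : A, ρ (a * b) = tsmulR b (ρ a)) ∧
    (∀ a : A, piSS (ρ a) = inclB a)

/-!
Every point mass `δ s` of `ℓ¹(S)` is a left identity, because `δ u * δ s = δ s` and the point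
masses span a dense subspace. Biflatness: `ρ(a) = δ s ⊗ a` is then a bimodule morphism, since
`a δ s ⊗ b` and `δ s ⊗ a b` agree for `a` a point mass and hence, by density, for all `a`;
and `π**(ρ a) = δ s a = a`. Failure of strong pseudo-amenability: a left identity `u` acts
trivially on the left of `A**`, so the condition `u·π**(m_α) = π**(m_α)·u → u` forces the net
`π**(m_α)` to converge to every left identity; hence there is at most one, whereas
`δ s ≠ δ t` for `s ≠ t`.
-/

open ContinuousLinearMap

theorem DirSys.Tendsto.unique {D : DirSys} {X : Type*} [MetricSpace X] {m : D.ι → X} {x y : X}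
    (hx : D.Tendsto m x) (hy : D.Tendsto m y) : x = y := by
  refine eq_of_forall_dist_le fun ε hε => ?_
  obtain ⟨i, hi⟩ := hx (ε / 2) (half_pos hε)
  obtain ⟨j, hj⟩ := hy (ε / 2) (half_pos hε)
  obtain ⟨k, hik, hjk⟩ := D.directed i j
  calc dist x y ≤ dist (m k) x + dist (m k) y := dist_triangle_left x y (m k)
    _ ≤ ε := by linarith [hi k hik, hj k hjk]

section LeftIdentity

variable {A : Type*} [NonUnitalNormedRing A] [NormedSpace ℂ A] [IsScalarTower ℂ A A]
  [SMulCommClass ℂ A A]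

noncomputable def elemTBilin : A →L[ℂ] A →L[ℂ] TensorBidual A :=
  ((flipₗᵢ ℂ (BilForms A) A ℂ).toContinuousLinearEquiv : _ →L[ℂ] A →L[ℂ] TensorBidual A).comp
    (ContinuousLinearMap.apply ℂ (NormedSpace.Dual ℂ A))

theorem bsmulL_eq_self {u : A} (hu : ∀ x, u * x = x) (Φ : Bidual A) : bsmulL u Φ = Φ := by
  ext f
  change Φ (dualROp A u f) = Φ f
  congr 1
  ext x
  exact congrArg f (hu x)

theorem StrongPseudoAmenable.eq_of_left_identities (h : StrongPseudoAmenable A) {u v : A}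
    (hu : ∀ x, u * x = x) (hv : ∀ x, v * x = x) : u = v := by
  obtain ⟨D, m, -, hcomm, hconv⟩ := h
  have tendsto_of_left_identity {w : A} (hw : ∀ x, w * x = x) :
      D.Tendsto (fun α => piSS (m α)) (inclB w) := by
    simpa only [← hcomm, bsmulL_eq_self hw] using hconv w
  exact (NormedSpace.inclusionInDoubleDualLi ℂ).injective
    ((tendsto_of_left_identity hu).unique (tendsto_of_left_identity hv))

end LeftIdentity

theorem biflat_of_dense_span_left_identities {A : Type} [NonUnitalNormedRing A] [NormedSpace ℂ A]
    [IsScalarTower ℂ A A] [SMulCommClass ℂ A A] {E : Set A} (hE : ∀ u ∈ E, ∀ x, u * x = x)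
    (hdense : Dense (Submodule.span ℂ E : Set A)) {e : A} (he : ∀ x, e * x = x) : Biflat A := by
  refine ⟨elemTBilin e, fun a b => ?_, fun a b => rfl, fun a => ?_⟩
  · have key :
        (elemTBilin.flip b).comp ((mul ℂ A).flip e) = (elemTBilin e).comp ((mul ℂ A).flip b) :=
      ext_on hdense fun u hu => by
        simp only [comp_apply, flip_apply, mul_apply', hE u hu]
    exact (congrArg (· a) key).symm
  · ext f
    exact congrArg f (he a)

theorem IsL1SemigroupAlgebra.injective {S : Type} {mulS : S → S → S} {L : Type}
    [NonUnitalNormedRing L] [NormedSpace ℂ L] {δ : S → L} (hL : IsL1SemigroupAlgebra S mulS L δ) :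
    Function.Injective δ := by
  classical
  intro s t hδ
  by_contra hst
  have h := hL.2.1 {s, t} fun u => if u = s then 1 else -1
  norm_num [Finset.sum_pair hst, Ne.symm hst, hδ] at h

theorem IsL1SemigroupAlgebra.mul_eq_of_rightZero {S : Type} {L : Type} [NonUnitalNormedRing L]
    [NormedSpace ℂ L] [IsScalarTower ℂ L L] [SMulCommClass ℂ L L] {δ : S → L}
    (hL : IsL1SemigroupAlgebra S (fun _ t => t) L δ) (u : S) (x : L) : δ u * x = x := by
  obtain ⟨hmul, -, hdense⟩ := hL
  have : mul ℂ L (δ u) = ContinuousLinearMap.id ℂ L :=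
    ext_on (Submodule.dense_iff_topologicalClosure_eq_top.mpr hdense) <| by
      rintro _ ⟨v, rfl⟩
      exact hmul u v
  exact congrArg (· x) this

theorem biflat_not_strongPseudoAmenable_rightZeroSemigroupAlgebra_general
    (S : Type) (hS : ∃ s t : S, s ≠ t)
    (L : Type) [NonUnitalNormedRing L] [NormedSpace ℂ L] [IsScalarTower ℂ L L]
    [SMulCommClass ℂ L L]
    (δ : S → L) (hL : IsL1SemigroupAlgebra S (fun _ t => t) L δ) :
    Biflat L ∧ ¬ StrongPseudoAmenable L := by
  obtain ⟨s, t, hst⟩ := hS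
  have hleft := hL.mul_eq_of_rightZero
  exact ⟨biflat_of_dense_span_left_identities (Set.forall_mem_range.2 hleft)
    (Submodule.dense_iff_topologicalClosure_eq_top.mpr hL.2.2) (hleft s),
    fun h => hst (hL.injective (h.eq_of_left_identities (hleft s) (hleft t)))⟩

/-- Let `S` be a right-zero semigroup (`s t = t`) with more than one
element.  Then `ℓ¹(S)` is biflat but not strong pseudo-amenable. -/
theorem biflat_not_strongPseudoAmenable_rightZeroSemigroupAlgebra
    (S : Type) (hS : ∃ s t : S, s ≠ t)
    (L : Type) [NonUnitalNormedRing L] [NormedSpace ℂ L] [IsScalarTower ℂ L L]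
    [SMulCommClass ℂ L L] [CompleteSpace L]
    (δ : S → L) (hL : IsL1SemigroupAlgebra S (fun _ t => t) L δ) :
    Biflat L ∧ ¬ StrongPseudoAmenable L :=
  biflat_not_strongPseudoAmenable_rightZeroSemigroupAlgebra_general S hS L δ hL
end
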